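/- Let L = k[X₁^{±1}, …, X_n^{±1}] be the ring of Laurent polynomials in n variables over a field k of characteristic zero, let g be a G-grading of L where G is a totally ordered abelian group, and let deg_g : L → G ∪ {−∞} be the degree function determined by g. Let B be any ring with k[X₁, …, X_n] ⊆ B ⊆ L, and let deg : B → G ∪ {−∞} be the restriction of deg_g. Then deg is tame over k. Moreover, if each Xᵢ is a g-homogeneous element of L, then for every k-derivation D : B → B, deg(D) is defined and deg(D) = max{δ_D(X₁), …, δ_D(X_n)}. -/

import Mathlib

/-!
Every unit of a graded domain over a totally ordered group is homogeneous, so all Laurent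
monomials `c X^e` are `g`-homogeneous, and each term of a Laurent polynomial has `g`-degree at
most the degree of the polynomial.

Let `M = max δ_D(Xᵢ)`. The elements `x` with `deg (D x) ≤ M + deg x` form a multiplicative set
(Leibniz' rule) stable under scalars and containing the `Xᵢ`, so it contains every polynomial
monomial, and, by the bound on the degrees of the terms, every polynomial in `B`. For an arbitrary
`x ∈ B` choose a monomial `u = X^N` with `u x ∈ k[X]`; then `u D x = D (u x) - x D u` gives
`deg (D x) ≤ M + deg x`. Hence `δ_D ≤ M` on `B`, and `M` is attained at some `Xᵢ` (or at `1`
when `M = -∞`).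
-/

section DegreePrelude

variable {B : Type*} [CommRing B] {G : Type*} [AddCommGroup G] [LinearOrder G] [IsOrderedAddMonoid G]

/-- A degree function on `B` with values in `G ∪ {-∞}` -/
def IsDegreeFunction (deg : B → WithBot G) : Prop :=
  (∀ x : B, deg x = ⊥ ↔ x = 0) ∧
  (∀ x y : B, deg (x * y) = deg x + deg y) ∧
  (∀ x y : B, deg (x + y) ≤ max (deg x) (deg y))

/-- `degDelta deg D x = deg (D x) - deg x` (with value `-∞` if `D x = 0`). -/
noncomputable def degDelta (deg : B → WithBot G) (D : B → B) (x : B) : WithBot G :=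
  (deg (D x)).map fun a => a - (deg x).unbotD 0

/-- The set `{deg (D x) - deg x : x ∈ B \ {0}}`. -/
def degDeltaSet (deg : B → WithBot G) (D : B → B) : Set (WithBot G) :=
  {m | ∃ x : B, x ≠ 0 ∧ degDelta deg D x = m}

/-- `deg (D)` is defined, i.e. the set `{deg (D x) - deg x : x ≠ 0}` has a
greatest element in `G ∪ {-∞}`. -/
def DegreeDefinedAt (deg : B → WithBot G) (D : B → B) : Prop :=
  ∃ M, IsGreatest (degDeltaSet deg D) M

end DegreePrelude

set_option synthInstance.maxHeartbeats 1000000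
set_option maxHeartbeats 1000000

/-- The variable `Xᵢ` in the Laurent polynomial ring
`k[X₁^{±1},…,Xₙ^{±1}] = AddMonoidAlgebra k (Fin n →₀ ℤ)`. -/
noncomputable def LaurentX (k : Type*) [Field k] (n : ℕ) (i : Fin n) :
    AddMonoidAlgebra k (Fin n →₀ ℤ) :=
  AddMonoidAlgebra.single (Finsupp.single i 1) 1

open DirectSum

section GradedRing

variable {ι A σ : Type*} [DecidableEq ι] [AddMonoid ι] [Ring A] [SetLike σ A]
  [AddSubmonoidClass σ A] (𝒜 : ι → σ) [GradedRing 𝒜]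

open Classical in
theorem DirectSum.coe_decompose_mul_of_uniqueAdd {x y : A} {i j : ι}
    (h : UniqueAdd (decompose 𝒜 x).support (decompose 𝒜 y).support i j) :
    (decompose 𝒜 (x * y) (i + j) : A) = decompose 𝒜 x i * decompose 𝒜 y j := by
  rw [decompose_mul, coe_mul_apply]
  refine Finset.sum_eq_single (i, j) (fun p hp hne => ?_) fun hij => ?_
  · simp only [Finset.mem_filter, Finset.mem_product] at hp
    obtain ⟨rfl, rfl⟩ := h hp.1.1 hp.1.2 hp.2
    exact absurd rfl hne
  · simp only [Finset.mem_filter, Finset.mem_product, DFinsupp.mem_support_iff, and_true,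
      not_and_or, not_not] at hij
    rcases hij with hij | hij <;> simp [hij]

/-- Units of a graded domain are homogeneous: the two distinct uniquely attained sums of
degrees provided by `TwoUniqueSums` would both have to be `0`, the degree of `u * v = 1`. -/
theorem SetLike.isHomogeneousElem_of_mul_eq_one [NoZeroDivisors A] [TwoUniqueSums ι] {u v : A}
    (h : u * v = 1) : SetLike.IsHomogeneousElem 𝒜 u := by
  classical
  rcases eq_or_ne u 0 with rfl | hu
  · exact ⟨0, zero_mem _⟩
  have hv : v ≠ 0 := by
    rintro rfl
    exact hu (by rw [← mul_one u, ← h, mul_zero, mul_zero])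
  have support_nonempty : ∀ x : A, x ≠ 0 → (decompose 𝒜 x).support.Nonempty := fun x hx =>
    Finset.nonempty_iff_ne_empty.2 fun h0 => hx (by rw [← sum_support_decompose 𝒜 x, h0,
      Finset.sum_empty])
  have hS := support_nonempty u hu
  have hT := support_nonempty v hv
  have hu_sum := sum_support_decompose 𝒜 u
  set S := (decompose 𝒜 u).support
  set T := (decompose 𝒜 v).support
  have unique_sum_eq_zero : ∀ p ∈ S ×ˢ T, UniqueAdd S T p.1 p.2 → p.1 + p.2 = 0 := by
    rintro ⟨s, t⟩ hst huniq
    rw [Finset.mem_product, DFinsupp.mem_support_iff, DFinsupp.mem_support_iff] at hst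
    by_contra hne
    refine mul_ne_zero (mt ZeroMemClass.coe_eq_zero.1 hst.1) (mt ZeroMemClass.coe_eq_zero.1 hst.2)
      ?_
    rw [← coe_decompose_mul_of_uniqueAdd 𝒜 huniq, h]
    exact decompose_of_mem_ne 𝒜 (SetLike.one_mem_graded 𝒜) (Ne.symm hne)
  have hcard : S.card * T.card ≤ 1 := by
    by_contra! hlt
    obtain ⟨p, hp, q, hq, hpq, hpu, hqu⟩ := TwoUniqueSums.uniqueAdd_of_one_lt_card hlt
    rw [Finset.mem_product] at hq
    refine hpq (Prod.ext_iff.2 (hpu hq.1 hq.2 ?_)).symm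
    rw [unique_sum_eq_zero q (Finset.mem_product.2 hq) hqu, unique_sum_eq_zero p hp hpu]
  obtain ⟨s, hs⟩ : ∃ s, S = {s} := Finset.card_eq_one.1 <| by
    have := Nat.le_mul_of_pos_right S.card hT.card_pos
    have := hS.card_pos
    omega
  rw [hs, Finset.sum_singleton] at hu_sum
  exact ⟨s, hu_sum ▸ SetLike.coe_mem _⟩

variable [LinearOrder ι]

/-- The degree function determined by the grading: `deg x` is the largest `i` with `xᵢ ≠ 0`. -/
def IsGradedDegree (deg : A → WithBot ι) : Prop :=
  ∀ x : A, x ≠ 0 → ∀ i : ι, (deg x ≤ ↑i ↔ ∀ j : ι, i < j → (decompose 𝒜 x j : A) = 0)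

variable {𝒜}

theorem IsGradedDegree.eq_of_mem {deg : A → WithBot ι} (hdeg : IsGradedDegree 𝒜 deg) {x : A}
    {i : ι} (hx : x ∈ 𝒜 i) (hx0 : x ≠ 0) (hne : deg x ≠ ⊥) : deg x = i := by
  obtain ⟨c, hc⟩ := WithBot.ne_bot_iff_exists.1 hne
  rw [← hc, WithBot.coe_inj]
  refine le_antisymm ?_ (not_lt.1 fun hci => hx0 ?_)
  · exact WithBot.coe_le_coe.1 <| hc ▸ (hdeg x hx0 i).2 fun j hij =>
      decompose_of_mem_ne 𝒜 hx hij.ne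
  · rw [← decompose_of_mem_same 𝒜 hx]
    exact (hdeg x hx0 c).1 hc.ge i hci

end GradedRing

section Delta

variable {B G : Type*} [AddCommGroup G] [LinearOrder G] [IsOrderedAddMonoid G]

theorem WithBot.map_sub_le_iff (p q : WithBot G) (d : G) :
    p.map (· - d) ≤ q ↔ p ≤ q + ↑d := by
  cases p with
  | bot => simp
  | coe c =>
    cases q with
    | bot => simp
    | coe m => rw [WithBot.map_coe, ← WithBot.coe_add, WithBot.coe_le_coe, WithBot.coe_le_coe,
        sub_le_iff_le_add]

theorem degDelta_le_iff {deg : B → WithBot G} (D : B → B) (M : WithBot G) {x : B}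
    (hx : deg x ≠ ⊥) : degDelta deg D x ≤ M ↔ deg (D x) ≤ M + deg x := by
  obtain ⟨d, hd⟩ := WithBot.ne_bot_iff_exists.1 hx
  rw [degDelta, ← hd, WithBot.unbotD_coe, WithBot.map_sub_le_iff]

end Delta

section DegreeFunction

variable {B G : Type*} [CommRing B] [AddCommGroup G] [LinearOrder G] {deg : B → WithBot G}

namespace IsDegreeFunction

variable (h : IsDegreeFunction deg)
include h

theorem ne_bot {x : B} (hx : x ≠ 0) : deg x ≠ ⊥ := fun h0 => hx ((h.1 x).1 h0)

theorem map_zero : deg 0 = ⊥ := (h.1 0).2 rfl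

theorem map_neg [IsOrderedAddMonoid G] (x : B) : deg (-x) = deg x := by
  rcases eq_or_ne x 0 with rfl | hx
  · rw [neg_zero]
  have hx' : (-1 : B) ≠ 0 := fun h1 => hx (by rw [← neg_neg x, ← neg_one_mul, h1, zero_mul])
  obtain ⟨g, hg⟩ := WithBot.ne_bot_iff_exists.1 (h.ne_bot hx')
  have hone := h.2.1 1 1
  have hsq := h.2.1 (-1) (-1)
  rw [neg_one_mul, neg_neg, ← hg, ← WithBot.coe_add] at hsq
  rw [mul_one, hsq, ← WithBot.coe_add, WithBot.coe_inj] at hone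
  have hg0 : g = 0 := by
    have hgg : g + g = 0 := left_eq_add.1 hone
    rcases lt_trichotomy g 0 with hlt | heq | hgt
    · exact absurd hgg (add_neg hlt hlt).ne
    · exact heq
    · exact absurd hgg (add_pos hgt hgt).ne'
  rw [← neg_one_mul, h.2.1, ← hg, hg0, WithBot.coe_zero, zero_add]

theorem map_sub_le [IsOrderedAddMonoid G] (x y : B) : deg (x - y) ≤ max (deg x) (deg y) := by
  simpa only [sub_eq_add_neg, h.map_neg] using h.2.2 x (-y)

theorem map_sum_le {ι : Type*} (s : Finset ι) (f : ι → B) :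
    deg (∑ i ∈ s, f i) ≤ s.sup fun i => deg (f i) :=
  Finset.sum_induction f (fun y => deg y ≤ s.sup fun i => deg (f i))
    (fun _ _ hx hy => (h.2.2 _ _).trans (max_le hx hy)) (h.map_zero ▸ bot_le)
    fun _ hi => Finset.le_sup (f := fun i => deg (f i)) hi

theorem subalgebra {R : Type*} [CommRing R] [Algebra R B] (S : Subalgebra R B) :
    IsDegreeFunction fun x : S => deg x :=
  ⟨fun x => (h.1 x).trans (by simp), fun x y => h.2.1 x y, fun x y => h.2.2 x y⟩

end IsDegreeFunction

end DegreeFunction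

section Derivation

variable {R B G : Type*} [CommRing R] [CommRing B] [Algebra R B] [AddCommGroup G] [LinearOrder G]
  [IsOrderedAddMonoid G] {deg : B → WithBot G}

namespace IsDegreeFunction

variable (h : IsDegreeFunction deg) (D : Derivation R B B) (M : WithBot G)

/-- The elements `x` with `δ_D x ≤ M`, the inequality being cleared of its subtraction. -/
def deltaLE : Submonoid B where
  carrier := {x | deg (D x) ≤ M + deg x}
  one_mem' := by simp [h.map_zero]
  mul_mem' {x y} hx hy := by
    simp only [Set.mem_ofPred_eq, Derivation.leibniz, smul_eq_mul, h.2.1] at hx hy ⊢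
    refine (h.2.2 _ _).trans (max_le ?_ ?_)
    · rw [h.2.1, add_left_comm]
      gcongr
    · rw [h.2.1, add_comm (deg x), add_left_comm]
      gcongr

variable {h D M}

theorem mem_deltaLE {x : B} : x ∈ h.deltaLE D M ↔ deg (D x) ≤ M + deg x := Iff.rfl

theorem mem_deltaLE_iff_degDelta_le {x : B} (hx : x ≠ 0) :
    x ∈ h.deltaLE D M ↔ degDelta deg D x ≤ M :=
  (degDelta_le_iff D M (h.ne_bot hx)).symm

theorem smul_mem_deltaLE (c : R) {x : B} (hx : x ∈ h.deltaLE D M) : c • x ∈ h.deltaLE D M := by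
  rw [mem_deltaLE, D.map_smul, Algebra.smul_def, Algebra.smul_def, h.2.1, h.2.1, add_left_comm]
  gcongr
  exact hx

theorem mem_deltaLE_of_mul_mem {u x : B} (hu0 : u ≠ 0) (hu : u ∈ h.deltaLE D M)
    (hux : u * x ∈ h.deltaLE D M) : x ∈ h.deltaLE D M := by
  have leibniz : u * D x = D (u * x) - x * D u := by
    rw [D.leibniz, smul_eq_mul, smul_eq_mul]
    ring
  have hle : deg u + deg (D x) ≤ deg u + (M + deg x) := by
    rw [← h.2.1, leibniz]
    refine (h.map_sub_le _ _).trans (max_le ?_ ?_)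
    · rw [mem_deltaLE, h.2.1, add_left_comm] at hux
      exact hux
    · calc deg (x * D u) ≤ deg x + (M + deg u) := by rw [h.2.1]; gcongr; exact hu
        _ = deg u + (M + deg x) := by ac_rfl
  obtain ⟨d, hd⟩ := WithBot.ne_bot_iff_exists.1 (h.ne_bot hu0)
  rw [← hd] at hle
  exact (WithBot.add_le_add_iff_left WithBot.coe_ne_bot).1 hle

theorem sum_mem_deltaLE {ι : Type*} (s : Finset ι) (f : ι → B)
    (hf : ∀ i ∈ s, f i ∈ h.deltaLE D M) (hdeg : ∀ i ∈ s, deg (f i) ≤ deg (∑ i ∈ s, f i)) :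
    ∑ i ∈ s, f i ∈ h.deltaLE D M := by
  rw [mem_deltaLE, map_sum]
  exact (h.map_sum_le _ _).trans <| Finset.sup_le fun i hi =>
    (hf i hi).trans (by gcongr; exact hdeg i hi)

theorem isGreatest_degDeltaSet [Nontrivial B] {ι : Type*} (s : Finset ι) (x : ι → B)
    (hx : ∀ i ∈ s, x i ≠ 0)
    (hall : ∀ y, y ∈ h.deltaLE D (s.sup fun i => degDelta deg D (x i))) :
    IsGreatest (degDeltaSet deg D) (s.sup fun i => degDelta deg D (x i)) := by
  refine ⟨Finset.sup_induction ?_ ?_ fun i hi => ⟨x i, hx i hi, rfl⟩, ?_⟩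
  · exact ⟨1, one_ne_zero, by simp [degDelta, h.map_zero]⟩
  · intro a ha b hb
    rcases le_total a b with hab | hab
    · rwa [sup_eq_right.2 hab]
    · rwa [sup_eq_left.2 hab]
  · rintro _ ⟨y, hy, rfl⟩
    exact (mem_deltaLE_iff_degDelta_le hy).1 (hall y)

end IsDegreeFunction

end Derivation

section GroupAlgebra

open AddMonoidAlgebra

variable {k Γ σ : Type*} [Field k] [AddCommGroup Γ] [NoZeroDivisors (k[Γ])]
  [SetLike σ (k[Γ])] [AddSubmonoidClass σ (k[Γ])]

section

variable {ι : Type*} [DecidableEq ι] [AddMonoid ι] [TwoUniqueSums ι] (𝒜 : ι → σ) [GradedRing 𝒜]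

theorem AddMonoidAlgebra.isHomogeneousElem_single (a : Γ) (c : k) :
    SetLike.IsHomogeneousElem 𝒜 (single a c) := by
  rcases eq_or_ne c 0 with rfl | hc
  · exact ⟨0, by rw [single_zero]; exact zero_mem _⟩
  refine SetLike.isHomogeneousElem_of_mul_eq_one 𝒜 (v := single (-a) c⁻¹) ?_
  rw [single_mul_single, add_neg_cancel, mul_inv_cancel₀ hc, one_def]

theorem AddMonoidAlgebra.coeff_decompose_of_single_mem (x : k[Γ]) {a : Γ} {i : ι}
    (hi : single a (x.coeff a) ∈ 𝒜 i) :
    (decompose 𝒜 x i : k[Γ]).coeff a = x.coeff a := by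
  classical
  conv_lhs => rw [← sum_coeff_single x]
  rw [Finsupp.sum, decompose_sum, DFinsupp.finsetSum_apply, AddSubmonoidClass.coe_finsetSum,
    coeff_sum, Finset.sum_apply']
  refine (Finset.sum_eq_single a (fun b _ hba => ?_) fun ha => ?_).trans ?_
  · obtain ⟨j, hj⟩ := isHomogeneousElem_single 𝒜 b (x.coeff b)
    rcases eq_or_ne j i with rfl | hji
    · rw [decompose_of_mem_same 𝒜 hj, coeff_single, Finsupp.single_apply, if_neg hba]
    · rw [decompose_of_mem_ne 𝒜 hj hji, coeff_zero, Finsupp.coe_zero, Pi.zero_apply]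
  · rw [Finsupp.notMem_support_iff.1 ha, single_zero, decompose_zero, DirectSum.zero_apply,
      ZeroMemClass.coe_zero, coeff_zero, Finsupp.coe_zero, Pi.zero_apply]
  · rw [decompose_of_mem_same 𝒜 hi, coeff_single, Finsupp.single_eq_same]

end

theorem IsGradedDegree.single_coeff_le {G : Type*} [AddCommGroup G] [LinearOrder G]
    [IsOrderedAddMonoid G] [DecidableEq G] {𝒜 : G → σ} [GradedRing 𝒜]
    {deg : k[Γ] → WithBot G} (hdegfn : IsDegreeFunction deg) (hdeg : IsGradedDegree 𝒜 deg)
    (x : k[Γ]) (a : Γ) : deg (single a (x.coeff a)) ≤ deg x := by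
  rcases eq_or_ne (x.coeff a) 0 with hxa | hxa
  · rw [hxa, single_zero, hdegfn.map_zero]
    exact bot_le
  have hx : x ≠ 0 := by
    rintro rfl
    exact hxa rfl
  have hs : single a (x.coeff a) ≠ 0 := mt single_eq_zero.1 hxa
  obtain ⟨i, hi⟩ := isHomogeneousElem_single 𝒜 a (x.coeff a)
  obtain ⟨c, hc⟩ := WithBot.ne_bot_iff_exists.1 (hdegfn.ne_bot hx)
  rw [hdeg.eq_of_mem hi hs (hdegfn.ne_bot hs), ← hc, WithBot.coe_le_coe]
  refine not_lt.1 fun hci => hxa ?_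
  rw [← coeff_decompose_of_single_mem 𝒜 x hi, (hdeg x hx c).1 hc.ge i hci]
  rfl

end GroupAlgebra

theorem exists_nonneg_forall_nonneg_add {Γ : Type*} [AddCommGroup Γ] [Lattice Γ]
    [IsOrderedAddMonoid Γ] (s : Finset Γ) : ∃ N, 0 ≤ N ∧ ∀ a ∈ s, 0 ≤ N + a := by
  classical
  obtain ⟨N, hN⟩ := Finset.exists_le (insert 0 (s.image Neg.neg))
  refine ⟨N, hN 0 (Finset.mem_insert_self _ _), fun a ha => ?_⟩
  rw [← neg_le_iff_add_nonneg]
  exact hN (-a) (Finset.mem_insert_of_mem (Finset.mem_image_of_mem _ ha))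

section Laurent

open AddMonoidAlgebra

variable {k : Type*} [Field k] {n : ℕ}

theorem prod_laurentX_pow {e : Fin n →₀ ℤ} (he : 0 ≤ e) :
    ∏ i, LaurentX k n i ^ (e i).toNat = single e 1 := by
  have hX : ∀ i, LaurentX k n i ^ (e i).toNat = single (Finsupp.single i (e i)) (1 : k) := by
    intro i
    rw [LaurentX, single_pow, one_pow, Finsupp.smul_single, nsmul_eq_mul, mul_one,
      Int.toNat_of_nonneg (he i)]
  rw [Finset.prod_congr rfl fun i _ => hX i, prod_single, Finset.prod_const_one,
    Finsupp.univ_sum_single]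

variable (B : Subalgebra k (k[Fin n →₀ ℤ])) (hXB : ∀ i, LaurentX k n i ∈ B)

/-- `c • X^e`, where negative exponents are truncated to `0`. -/
noncomputable def laurentMonomial (e : Fin n →₀ ℤ) (c : k) : B :=
  c • ∏ i, ⟨LaurentX k n i, hXB i⟩ ^ (e i).toNat

theorem coe_laurentMonomial {e : Fin n →₀ ℤ} (he : 0 ≤ e) (c : k) :
    (laurentMonomial B hXB e c : k[Fin n →₀ ℤ]) = single e c := by
  rw [laurentMonomial, Subalgebra.coe_smul, SubmonoidClass.coe_finsetProd]
  simp only [SubmonoidClass.coe_pow]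
  rw [prod_laurentX_pow he, smul_single, smul_eq_mul, mul_one]

variable {G : Type*} [AddCommGroup G] [LinearOrder G] [IsOrderedAddMonoid G]
  {deg : k[Fin n →₀ ℤ] → WithBot G} (hdegfn : IsDegreeFunction deg)
  (D : Derivation k B B) {M : WithBot G}
  (hX : ∀ i, ⟨LaurentX k n i, hXB i⟩ ∈ (hdegfn.subalgebra B).deltaLE D M)
include hX

theorem laurentMonomial_mem_deltaLE (e : Fin n →₀ ℤ) (c : k) :
    laurentMonomial B hXB e c ∈ (hdegfn.subalgebra B).deltaLE D M :=
  IsDegreeFunction.smul_mem_deltaLE c (prod_mem fun i _ => pow_mem (hX i) _)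

variable {σ : Type*} [DecidableEq G] [SetLike σ (k[Fin n →₀ ℤ])]
  [AddSubmonoidClass σ (k[Fin n →₀ ℤ])] {𝒜 : G → σ} [GradedRing 𝒜]
  (hdeg : IsGradedDegree 𝒜 deg)
include hdeg

theorem mem_deltaLE_of_support_nonneg (y : B)
    (hy : ∀ b ∈ (y : k[Fin n →₀ ℤ]).coeff.support, 0 ≤ b) :
    y ∈ (hdegfn.subalgebra B).deltaLE D M := by
  have hsum : y = ∑ b ∈ (y : k[Fin n →₀ ℤ]).coeff.support,
      laurentMonomial B hXB b ((y : k[Fin n →₀ ℤ]).coeff b) := by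
    apply Subtype.ext
    rw [AddSubmonoidClass.coe_finsetSum,
      Finset.sum_congr rfl fun b hb => coe_laurentMonomial B hXB (hy b hb) _]
    exact (sum_coeff_single _).symm
  rw [hsum]
  refine IsDegreeFunction.sum_mem_deltaLE _ _
    (fun b _ => laurentMonomial_mem_deltaLE B hXB hdegfn D hX _ _) fun b hb => ?_
  rw [← hsum]
  show deg (laurentMonomial B hXB b _ : k[Fin n →₀ ℤ]) ≤ deg y
  rw [coe_laurentMonomial B hXB (hy b hb)]
  exact hdeg.single_coeff_le hdegfn _ b

theorem forall_mem_deltaLE (x : B) : x ∈ (hdegfn.subalgebra B).deltaLE D M := by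
  obtain ⟨N, hN, hNx⟩ := exists_nonneg_forall_nonneg_add (x : k[Fin n →₀ ℤ]).coeff.support
  have hu : (laurentMonomial B hXB N 1 : k[Fin n →₀ ℤ]) = single N 1 :=
    coe_laurentMonomial B hXB hN 1
  refine IsDegreeFunction.mem_deltaLE_of_mul_mem (u := laurentMonomial B hXB N 1) ?_
    (laurentMonomial_mem_deltaLE B hXB hdegfn D hX _ _)
    (mem_deltaLE_of_support_nonneg B hXB hdegfn D hX hdeg _ fun b hb => ?_)
  · intro h0
    have := congrArg Subtype.val h0
    rw [hu] at this
    exact one_ne_zero (single_eq_zero.1 this)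
  · rw [Subalgebra.coe_mul, hu, Finsupp.mem_support_iff, coeff_single_mul_apply, one_mul] at hb
    simpa using hNx _ (Finsupp.mem_support_iff.2 hb)

end Laurent

theorem stmt16_general {k G : Type*} [Field k]
    [AddCommGroup G] [LinearOrder G] [IsOrderedAddMonoid G] [DecidableEq G] (n : ℕ)
    -- a G-grading g of the Laurent polynomial ring L
    (𝒜 : G → AddSubgroup (AddMonoidAlgebra k (Fin n →₀ ℤ))) [GradedRing 𝒜]
    -- deg_g is the degree function determined by the grading
    (degg : AddMonoidAlgebra k (Fin n →₀ ℤ) → WithBot G)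
    (hdegfn : IsDegreeFunction degg)
    (hdeg : ∀ x : AddMonoidAlgebra k (Fin n →₀ ℤ), x ≠ 0 → ∀ i : G,
      (degg x ≤ ↑i ↔ ∀ j : G, i < j → (DirectSum.decompose 𝒜 x j : AddMonoidAlgebra k (Fin n →₀ ℤ)) = 0))
    -- B is a ring with k[X₁,…,Xₙ] ⊆ B ⊆ L
    (B : Subalgebra k (AddMonoidAlgebra k (Fin n →₀ ℤ)))
    (hXB : ∀ i : Fin n, LaurentX k n i ∈ B) :
    -- the restriction of deg_g to B is tame over k:
    (∀ D : Derivation k ↥B ↥B,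
      DegreeDefinedAt (fun b : ↥B => degg ↑b) ⇑D) ∧
    -- moreover, if each Xᵢ is g-homogeneous:
    ((∀ i : Fin n, ∃ d : G, LaurentX k n i ∈ 𝒜 d) →
      ∀ D : Derivation k ↥B ↥B,
        IsGreatest (degDeltaSet (fun b : ↥B => degg ↑b) ⇑D)
          (Finset.univ.sup fun i : Fin n =>
            degDelta (fun b : ↥B => degg ↑b) ⇑D ⟨LaurentX k n i, hXB i⟩)) := by
  have main : ∀ D : Derivation k ↥B ↥B,
      IsGreatest (degDeltaSet (fun b : ↥B => degg ↑b) ⇑D)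
        (Finset.univ.sup fun i : Fin n =>
          degDelta (fun b : ↥B => degg ↑b) ⇑D ⟨LaurentX k n i, hXB i⟩) := by
    intro D
    have hX_ne : ∀ i, (⟨LaurentX k n i, hXB i⟩ : B) ≠ 0 := fun i h0 =>
      one_ne_zero (AddMonoidAlgebra.single_eq_zero.1 (congrArg Subtype.val h0))
    refine IsDegreeFunction.isGreatest_degDeltaSet (h := hdegfn.subalgebra B) _ _
      (fun i _ => hX_ne i) (forall_mem_deltaLE B hXB hdegfn D (fun i => ?_) hdeg)
    rw [IsDegreeFunction.mem_deltaLE_iff_degDelta_le (hX_ne i)]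
    exact Finset.le_sup (Finset.mem_univ i)
      (f := fun j => degDelta (fun b : ↥B => degg ↑b) ⇑D ⟨LaurentX k n j, hXB j⟩)
  exact ⟨fun D => ⟨_, main D⟩, fun _ => main⟩

theorem stmt16 {k G : Type*} [Field k] [CharZero k]
    [AddCommGroup G] [LinearOrder G] [IsOrderedAddMonoid G] [DecidableEq G] (n : ℕ)
    -- a G-grading g of the Laurent polynomial ring L
    (𝒜 : G → AddSubgroup (AddMonoidAlgebra k (Fin n →₀ ℤ))) [GradedRing 𝒜]
    -- deg_g is the degree function determined by the grading
    (degg : AddMonoidAlgebra k (Fin n →₀ ℤ) → WithBot G)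
    (hdegfn : IsDegreeFunction degg)
    (hdeg : ∀ x : AddMonoidAlgebra k (Fin n →₀ ℤ), x ≠ 0 → ∀ i : G,
      (degg x ≤ ↑i ↔ ∀ j : G, i < j → (DirectSum.decompose 𝒜 x j : AddMonoidAlgebra k (Fin n →₀ ℤ)) = 0))
    -- B is a ring with k[X₁,…,Xₙ] ⊆ B ⊆ L
    (B : Subalgebra k (AddMonoidAlgebra k (Fin n →₀ ℤ)))
    (hpoly : Algebra.adjoin k (Set.range (LaurentX k n)) ≤ B)
    (hXB : ∀ i : Fin n, LaurentX k n i ∈ B) :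
    -- the restriction of deg_g to B is tame over k:
    (∀ D : Derivation k ↥B ↥B,
      DegreeDefinedAt (fun b : ↥B => degg ↑b) ⇑D) ∧
    -- moreover, if each Xᵢ is g-homogeneous:
    ((∀ i : Fin n, ∃ d : G, LaurentX k n i ∈ 𝒜 d) →
      ∀ D : Derivation k ↥B ↥B,
        IsGreatest (degDeltaSet (fun b : ↥B => degg ↑b) ⇑D)
          (Finset.univ.sup fun i : Fin n =>
            degDelta (fun b : ↥B => degg ↑b) ⇑D ⟨LaurentX k n i, hXB i⟩)) :=
  stmt16_general n 𝒜 degg hdegfn hdeg B hXB
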